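/- Let J ∈ C^∞(Ω) be harmonic for g, i.e. Δ_g J = 0 on Ω, and let p ∈ (1, 2]. Then for every δ > 0 and every χ ∈ C_c^∞(Ω), the function j_δ := (δ² + J²)^{p/4} satisfies the Caccioppoli-type estimate ∫_Ω χ² |dj_δ|_g² dvol_g ≤ (p/(p−1))² ∫_Ω |dχ|_g² · j_δ² dvol_g. -/

import Mathlib

open MeasureTheory

noncomputable section

/-- Points of the coordinate space `ℝ⁴`. -/
abbrev V4 : Type := Fin 4 → ℝ

/-- The `i`-th partial derivative `∂ᵢ u (x)`. -/
def pd (i : Fin 4) (u : V4 → ℝ) (x : V4) : ℝ :=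
  fderiv ℝ u x (Pi.single i 1)

/-- `√(det g(x))`, the density of the Riemannian volume measure `dvol_g`. -/
def sqrtDet (g : V4 → Matrix (Fin 4) (Fin 4) ℝ) (x : V4) : ℝ :=
  Real.sqrt (g x).det

/-- `⟨du, dv⟩_g (x) = Σ_{i,j} (g(x)⁻¹)_{ij} ∂ᵢu(x) ∂ⱼv(x)`. -/
def gInner (g : V4 → Matrix (Fin 4) (Fin 4) ℝ) (u v : V4 → ℝ) (x : V4) : ℝ :=
  ∑ i, ∑ j, (g x)⁻¹ i j * pd i u x * pd j v x

/-- `|du|_g²(x)`. -/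
def gNormSq (g : V4 → Matrix (Fin 4) (Fin 4) ℝ) (u : V4 → ℝ) (x : V4) : ℝ :=
  gInner g u u x

/-- The Laplace–Beltrami operator
`Δ_g u = (det g)^{-1/2} Σ_i ∂ᵢ(√(det g) Σ_j (g⁻¹)_{ij} ∂ⱼ u)`. -/
def lap (g : V4 → Matrix (Fin 4) (Fin 4) ℝ) (u : V4 → ℝ) (x : V4) : ℝ :=
  (sqrtDet g x)⁻¹ *
    ∑ i, pd i (fun y => sqrtDet g y * ∑ j, (g y)⁻¹ i j * pd j u y) x

/-- `f ∈ C_c^∞(Ω)`: a smooth compactly supported function with support inside `Ω`. -/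
structure IsTestFn (Ω : Set V4) (f : V4 → ℝ) : Prop where
  smooth : ContDiff ℝ (⊤ : ℕ∞) f
  compactSupport : HasCompactSupport f
  support_subset : tsupport f ⊆ Ω

/-- `g` is a smooth Riemannian metric (in coordinates) on the open set `Ω`. -/
structure IsMetric (Ω : Set V4) (g : V4 → Matrix (Fin 4) (Fin 4) ℝ) : Prop where
  isOpen : IsOpen Ω
  smooth : ∀ i j, ContDiffOn ℝ (⊤ : ℕ∞) (fun x => g x i j) Ω
  symm : ∀ x ∈ Ω, (g x).IsSymm
  posDef : ∀ x ∈ Ω, (g x).PosDef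

open Set

variable {Ω : Set V4} {g : V4 → Matrix (Fin 4) (Fin 4) ℝ}





/-- Gluing: smooth on open `s`, vanishing outside a closed `K ⊆ s`, gives global smoothness. -/
lemma contDiff_of_contDiffOn_of_zero {f : V4 → ℝ} {s K : Set V4}
    (hs : IsOpen s) (hK : IsClosed K) (hKs : K ⊆ s)
    (hf : ContDiffOn ℝ (⊤ : ℕ∞) f s) (h0 : ∀ x ∉ K, f x = 0) : ContDiff ℝ (⊤ : ℕ∞) f := by
  rw [← contDiffOn_univ]
  intro x _
  by_cases hx : x ∈ s
  · exact (hf.contDiffAt (hs.mem_nhds hx)).contDiffWithinAt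
  · have hxK : x ∈ Kᶜ := fun h => hx (hKs h)
    have : ContDiffAt ℝ (⊤ : ℕ∞) f x := by
      have : f =ᶠ[nhds x] (fun _ => 0) := by
        filter_upwards [hK.isOpen_compl.mem_nhds hxK] with y hy using h0 y hy
      exact (contDiffAt_const (c := (0:ℝ))).congr_of_eventuallyEq this
    exact this.contDiffWithinAt

lemma continuous_of_continuousOn_of_zero {f : V4 → ℝ} {s K : Set V4}
    (hs : IsOpen s) (hK : IsClosed K) (hKs : K ⊆ s)
    (hf : ContinuousOn f s) (h0 : ∀ x ∉ K, f x = 0) : Continuous f := by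
  rw [continuous_iff_continuousAt]
  intro x
  by_cases hx : x ∈ s
  · exact hf.continuousAt (hs.mem_nhds hx)
  · have hxK : x ∈ Kᶜ := fun h => hx (hKs h)
    have : f =ᶠ[nhds x] (fun _ => 0) := by
      filter_upwards [hK.isOpen_compl.mem_nhds hxK] with y hy using h0 y hy
    exact (continuousAt_const (y := (0:ℝ))).congr this.symm

lemma integrableOn_of_continuousOn_of_zero {f : V4 → ℝ} {s K : Set V4}
    (hs : IsOpen s) (hK : IsCompact K) (hKs : K ⊆ s)
    (hf : ContinuousOn f s) (h0 : ∀ x ∉ K, f x = 0) : IntegrableOn f s := by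
  have hc : Continuous f := continuous_of_continuousOn_of_zero hs hK.isClosed hKs hf h0
  have hsupp : HasCompactSupport f :=
    HasCompactSupport.intro hK (fun x hx => h0 x hx)
  exact (hc.integrable_of_hasCompactSupport hsupp).integrableOn






lemma integral_div_eq_zero (H : Fin 4 → V4 → ℝ)
    (hH : ∀ i, ContDiff ℝ (⊤ : ℕ∞) (H i)) (hsupp : ∀ i, HasCompactSupport (H i)) :
    ∫ x : V4, ∑ i, pd i (H i) x = 0 := by
  obtain ⟨R, hR⟩ : ∃ R : ℝ, ∀ i, ∀ x ∈ tsupport (H i), ‖x‖ ≤ R := by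
    have hcpt : IsCompact (⋃ i, tsupport (H i)) :=
      isCompact_iUnion fun i => hsupp i
    obtain ⟨R, hR⟩ := hcpt.isBounded.exists_norm_le
    exact ⟨R, fun i x hx => hR x (Set.mem_iUnion.2 ⟨i, hx⟩)⟩
  set R' : ℝ := max R 0 + 1 with hR'
  have hR'pos : ∀ i, ∀ x ∈ tsupport (H i), ‖x‖ < R' := by
    intro i x hx
    calc ‖x‖ ≤ R := hR i x hx
    _ ≤ max R 0 := le_max_left _ _
    _ < R' := by simp [hR']
  have hnot : ∀ (z : V4), R' ≤ ‖z‖ → ∀ i, H i z = 0 := by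
    intro z hz i
    by_contra h
    exact absurd (hR'pos i z (subset_tsupport _ h)) (not_lt.2 hz)
  have hnot' : ∀ (z : V4) (j : Fin 4), R' ≤ |z j| → ∀ i, H i z = 0 := by
    intro z j hz i
    have : |z j| ≤ ‖z‖ := by
      simpa using norm_le_pi_norm z j
    exact hnot z (le_trans hz this) i
  set a : V4 := fun _ => -R' with ha
  set b : V4 := fun _ => R' with hb
  have hR'0 : (0:ℝ) < R' := by
    have := le_max_right R 0; simp only [hR']; linarith
  have hle : a ≤ b := by
    intro i; simp only [ha, hb]; nlinarith [le_max_right R 0]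
  have hcontdiv : Continuous (fun x => ∑ i, fderiv ℝ (H i) x (Pi.single i 1)) := by
    exact continuous_finset_sum _ fun i _ =>
      ((hH i).continuous_fderiv (by simp)).clm_apply continuous_const
  have key := MeasureTheory.integral_divergence_of_hasFDerivAt_off_countable'
    (n := 3) a b hle H (fun i x => fderiv ℝ (H i) x) ∅ Set.countable_empty
    (fun i => ((hH i).continuous).continuousOn)
    (fun x _ i => ((hH i).differentiable (by simp) x).hasFDerivAt)
    (hcontdiv.continuousOn.integrableOn_compact isCompact_Icc)
  -- faces vanish
  have hfaces : ∀ i : Fin (3+1),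
      ((∫ x in Icc (a ∘ i.succAbove) (b ∘ i.succAbove), H i (i.insertNth (b i) x)) -
        ∫ x in Icc (a ∘ i.succAbove) (b ∘ i.succAbove), H i (i.insertNth (a i) x)) = 0 := by
    intro i
    have h1 : ∀ y : Fin 3 → ℝ, H i (i.insertNth (b i) y) = 0 := by
      intro y
      apply hnot' _ i _ i
      rw [Fin.insertNth_apply_same]
      simp [hb, abs_of_pos hR'0]
    have h2 : ∀ y : Fin 3 → ℝ, H i (i.insertNth (a i) y) = 0 := by
      intro y
      apply hnot' _ i _ i
      rw [Fin.insertNth_apply_same]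
      simp [ha, abs_neg, abs_of_pos hR'0]
    simp [h1, h2]
  rw [Fintype.sum_eq_zero _ hfaces] at key
  have hext : ∫ x : V4, ∑ i, pd i (H i) x
      = ∫ x in Icc a b, ∑ i, fderiv ℝ (H i) x (Pi.single i 1) := by
    rw [show (fun x : V4 => ∑ i, pd i (H i) x)
        = fun x => ∑ i, fderiv ℝ (H i) x (Pi.single i 1) from rfl]
    refine (setIntegral_eq_integral_of_forall_compl_eq_zero ?_).symm
    intro x hx
    have hxbig : R' ≤ ‖x‖ := by
      rw [Set.mem_Icc] at hx
      rw [not_and_or] at hx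
      obtain ⟨j, hj⟩ : ∃ j, x j < a j ∨ b j < x j := by
        rcases hx with h | h
        · rw [Pi.le_def] at h; push_neg at h
          obtain ⟨j, hj⟩ := h; exact ⟨j, Or.inl hj⟩
        · rw [Pi.le_def] at h; push_neg at h
          obtain ⟨j, hj⟩ := h; exact ⟨j, Or.inr hj⟩
      have h1 : R' ≤ |x j| := by
        rcases hj with h | h
        · simp only [ha] at h
          have := neg_abs_le (x j); linarith
        · simp only [hb] at h
          have := le_abs_self (x j); linarith
      have h2 : |x j| ≤ ‖x‖ := by simpa using norm_le_pi_norm x j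
      linarith
    refine Finset.sum_eq_zero fun i _ => ?_
    have hxt : x ∉ tsupport (H i) := fun h => absurd (hR'pos i x h) (not_lt.2 hxbig)
    rw [fderiv_of_notMem_tsupport _ hxt]
    simp
  rw [hext, key]








variable {Ω : Set V4} {g : V4 → Matrix (Fin 4) (Fin 4) ℝ}

lemma contDiffOn_finset_prod {ι : Type*} {f : ι → V4 → ℝ} {s : Finset ι} {t : Set V4}
    (h : ∀ i ∈ s, ContDiffOn ℝ (⊤ : ℕ∞) (f i) t) :
    ContDiffOn ℝ (⊤ : ℕ∞) (fun x => ∏ i ∈ s, f i x) t := by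
  classical
  induction s using Finset.induction with
  | empty => simpa using contDiffOn_const
  | insert _ _ hns ih =>
    rename_i a s
    simp only [Finset.prod_insert hns]
    exact (h a (Finset.mem_insert_self a s)).mul
      (ih fun i hi => h i (Finset.mem_insert_of_mem hi))

lemma contDiffOn_det_of_entries {A : V4 → Matrix (Fin 4) (Fin 4) ℝ} {t : Set V4}
    (h : ∀ i j, ContDiffOn ℝ (⊤ : ℕ∞) (fun x => A x i j) t) :
    ContDiffOn ℝ (⊤ : ℕ∞) (fun x => (A x).det) t := by
  have : (fun x => (A x).det)
      = fun x => ∑ σ : Equiv.Perm (Fin 4), ((Equiv.Perm.sign σ : ℤ) : ℝ) * ∏ i, A x (σ i) i := by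
    funext x
    rw [Matrix.det_apply]
    refine Finset.sum_congr rfl fun σ _ => ?_
    rw [Units.smul_def, zsmul_eq_mul]
  rw [this]
  refine ContDiffOn.sum fun σ _ => ?_
  exact contDiffOn_const.mul (contDiffOn_finset_prod fun i _ => h (σ i) i)

lemma IsMetric.contDiffOn_det (hg : IsMetric Ω g) :
    ContDiffOn ℝ (⊤ : ℕ∞) (fun x => (g x).det) Ω :=
  contDiffOn_det_of_entries hg.smooth

lemma IsMetric.det_pos (hg : IsMetric Ω g) {x : V4} (hx : x ∈ Ω) : 0 < (g x).det :=
  (hg.posDef x hx).det_pos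

lemma IsMetric.sqrtDet_pos (hg : IsMetric Ω g) {x : V4} (hx : x ∈ Ω) : 0 < sqrtDet g x :=
  Real.sqrt_pos.2 (hg.det_pos hx)

lemma IsMetric.contDiffOn_sqrtDet (hg : IsMetric Ω g) :
    ContDiffOn ℝ (⊤ : ℕ∞) (sqrtDet g) Ω := by
  have : sqrtDet g = fun x => Real.sqrt ((g x).det) := rfl
  rw [this]
  exact hg.contDiffOn_det.sqrt fun x hx => (hg.det_pos hx).ne'

lemma IsMetric.contDiffOn_inv (hg : IsMetric Ω g) (i j : Fin 4) :
    ContDiffOn ℝ (⊤ : ℕ∞) (fun x => (g x)⁻¹ i j) Ω := by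
  have heq : ∀ x ∈ Ω, (g x)⁻¹ i j = ((g x).det)⁻¹ * (g x).adjugate i j := by
    intro x hx
    rw [Matrix.inv_def, Matrix.smul_apply, Ring.inverse_eq_inv, smul_eq_mul]
  have hadj : ContDiffOn ℝ (⊤ : ℕ∞) (fun x => (g x).adjugate i j) Ω := by
    have : ∀ x, (g x).adjugate i j = ((g x).updateRow j (Pi.single i 1)).det := fun x =>
      Matrix.adjugate_apply _ _ _
    simp only [this]
    apply contDiffOn_det_of_entries
    intro k l
    by_cases hkj : k = j
    · subst hkj
      simp only [Matrix.updateRow_self]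
      exact contDiffOn_const
    · simp only [Matrix.updateRow_ne hkj]
      exact hg.smooth k l
  refine ContDiffOn.congr ((hg.contDiffOn_det.inv (fun x hx => (hg.det_pos hx).ne')).mul hadj) heq

/-- partial derivatives of smooth functions are smooth on open sets -/
lemma contDiffOn_pd (hΩ : IsOpen Ω) {u : V4 → ℝ} (hu : ContDiffOn ℝ (⊤ : ℕ∞) u Ω) (i : Fin 4) :
    ContDiffOn ℝ (⊤ : ℕ∞) (fun x => pd i u x) Ω := by
  have h1 : ContDiffOn ℝ (⊤ : ℕ∞) (fderiv ℝ u) Ω := hu.fderiv_of_isOpen hΩ (by simp)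
  exact h1.clm_apply contDiffOn_const

lemma differentiableAt_of_contDiffOn (hΩ : IsOpen Ω) {u : V4 → ℝ} (hu : ContDiffOn ℝ (⊤ : ℕ∞) u Ω)
    {x : V4} (hx : x ∈ Ω) : DifferentiableAt ℝ u x :=
  (hu.contDiffAt (hΩ.mem_nhds hx)).differentiableAt (by simp)




lemma quad_expand (M : Matrix (Fin 4) (Fin 4) ℝ) (hM : M.PosSemidef) (hsym : M.IsSymm)
    (u v : Fin 4 → ℝ) {ε : ℝ} (hε : 0 < ε) :
    -2 * (∑ i, ∑ j, M i j * v i * u j) ≤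
      ε * (∑ i, ∑ j, M i j * u i * u j) + ε⁻¹ * (∑ i, ∑ j, M i j * v i * v j) := by
  set A := ∑ i, ∑ j, M i j * u i * u j with hA
  set B := ∑ i, ∑ j, M i j * v i * v j with hB
  set C := ∑ i, ∑ j, M i j * v i * u j with hC
  have hQ : ∀ w : Fin 4 → ℝ, 0 ≤ ∑ i, ∑ j, M i j * w i * w j := by
    intro w
    have h := hM.dotProduct_mulVec_nonneg w
    have : dotProduct (star w) (M.mulVec w) = ∑ i, ∑ j, M i j * w i * w j := by
      simp only [dotProduct, Matrix.mulVec, star_trivial, Finset.mul_sum]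
      exact Finset.sum_congr rfl fun i _ => Finset.sum_congr rfl fun j _ => by ring
    rwa [this] at h
  have hCsym : (∑ i, ∑ j, M i j * u i * v j) = C := by
    rw [hC, Finset.sum_comm]
    refine Finset.sum_congr rfl fun j _ => Finset.sum_congr rfl fun i _ => ?_
    rw [← hsym.apply i j]; ring
  have key := hQ (fun k => ε * u k + v k)
  have expand : (∑ i, ∑ j, M i j * (ε * u i + v i) * (ε * u j + v j))
      = ε^2 * A + 2 * ε * C + B := by
    have h1 : ∀ i j, M i j * (ε * u i + v i) * (ε * u j + v j)
        = ε^2 * (M i j * u i * u j) + ε * (M i j * u i * v j)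
          + ε * (M i j * v i * u j) + M i j * v i * v j := fun i j => by ring
    simp only [h1, Finset.sum_add_distrib, ← Finset.mul_sum]
    rw [hCsym]
    ring
  rw [expand] at key
  have h2 : ε * (ε * A + ε⁻¹ * B + 2 * C) = ε^2 * A + 2*ε*C + B := by
    field_simp; ring
  nlinarith [key, mul_pos hε hε]







lemma pd_of_hasFDerivAt {u : V4 → ℝ} {L : V4 →L[ℝ] ℝ} {x : V4}
    (h : HasFDerivAt u L x) (i : Fin 4) : pd i u x = L (Pi.single i 1) := by
  rw [pd, h.fderiv]

lemma pd_mul {u v : V4 → ℝ} {x : V4} (hu : DifferentiableAt ℝ u x)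
    (hv : DifferentiableAt ℝ v x) (i : Fin 4) :
    pd i (fun y => u y * v y) x = pd i u x * v x + u x * pd i v x := by
  rw [pd, fderiv_fun_mul hu hv]
  simp only [ContinuousLinearMap.add_apply, ContinuousLinearMap.smul_apply, smul_eq_mul]
  rw [pd, pd]; ring

lemma pd_const_add {u : V4 → ℝ} {x : V4} (c : ℝ) (i : Fin 4) :
    pd i (fun y => c + u y) x = pd i u x := by
  rw [pd, fderiv_const_add, pd]

lemma pd_sq {u : V4 → ℝ} {x : V4} (hu : DifferentiableAt ℝ u x) (i : Fin 4) :
    pd i (fun y => u y ^ 2) x = 2 * u x * pd i u x := by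
  have h : (fun y => u y ^ 2) = fun y => u y * u y := by funext y; ring
  rw [h, pd_mul hu hu]; ring

lemma pd_rpow {u : V4 → ℝ} {x : V4} (hu : DifferentiableAt ℝ u x) (h0 : u x ≠ 0) (r : ℝ)
    (i : Fin 4) :
    pd i (fun y => u y ^ r) x = r * u x ^ (r - 1) * pd i u x := by
  have h := (hu.hasFDerivAt.rpow_const (p := r) (Or.inl h0))
  rw [pd_of_hasFDerivAt h]
  simp only [ContinuousLinearMap.smul_apply, smul_eq_mul]
  rw [pd]

lemma gInner_expand {g : V4 → Matrix (Fin 4) (Fin 4) ℝ} {x : V4} {φ χ J : V4 → ℝ} {a b : ℝ}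
    (h : ∀ i, pd i φ x = a * pd i χ x + b * pd i J x) :
    gInner g φ J x = a * gInner g χ J x + b * gInner g J J x := by
  unfold gInner
  rw [Finset.mul_sum, Finset.mul_sum, ← Finset.sum_add_distrib]
  refine Finset.sum_congr rfl fun i _ => ?_
  rw [Finset.mul_sum, Finset.mul_sum, ← Finset.sum_add_distrib]
  refine Finset.sum_congr rfl fun j _ => ?_
  rw [h i]; ring

lemma gInner_smul2 {g : V4 → Matrix (Fin 4) (Fin 4) ℝ} {x : V4} {u u' v v' : V4 → ℝ} {a b : ℝ}
    (hu : ∀ i, pd i u x = a * pd i u' x) (hv : ∀ j, pd j v x = b * pd j v' x) :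
    gInner g u v x = a * b * gInner g u' v' x := by
  unfold gInner
  rw [Finset.mul_sum]
  refine Finset.sum_congr rfl fun i _ => ?_
  rw [Finset.mul_sum]
  refine Finset.sum_congr rfl fun j _ => ?_
  rw [hu i, hv j]; ring


lemma weak_identity (hg : IsMetric Ω g) {J : V4 → ℝ} (hJ : ContDiffOn ℝ (⊤ : ℕ∞) J Ω)
    (hharm : ∀ x ∈ Ω, lap g J x = 0) {φ : V4 → ℝ} (hφ : ContDiffOn ℝ (⊤ : ℕ∞) φ Ω)
    (hcpt : HasCompactSupport φ) (hts : tsupport φ ⊆ Ω) :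
    ∫ x in Ω, gInner g φ J x * sqrtDet g x = 0 := by
  have hΩ := hg.isOpen
  set F : Fin 4 → V4 → ℝ := fun i y => sqrtDet g y * ∑ j, (g y)⁻¹ i j * pd j J y with hF
  have hFval : ∀ i y, F i y = sqrtDet g y * ∑ j, (g y)⁻¹ i j * pd j J y := fun i y => rfl
  have hFsm : ∀ i, ContDiffOn ℝ (⊤ : ℕ∞) (F i) Ω := fun i =>
    hg.contDiffOn_sqrtDet.mul
      (ContDiffOn.sum fun j _ => (hg.contDiffOn_inv i j).mul (contDiffOn_pd hΩ hJ j))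
  set H : Fin 4 → V4 → ℝ := fun i y => φ y * F i y with hH
  have hHval : ∀ i y, H i y = φ y * F i y := fun i y => rfl
  have hHzero : ∀ i, ∀ x ∉ tsupport φ, H i x = 0 := by
    intro i x hx
    rw [hHval, image_eq_zero_of_notMem_tsupport hx, zero_mul]
  have hHsm : ∀ i, ContDiff ℝ (⊤ : ℕ∞) (H i) := fun i =>
    contDiff_of_contDiffOn_of_zero hΩ (isClosed_tsupport φ) hts (hφ.mul (hFsm i)) (hHzero i)
  have hHsupp : ∀ i, HasCompactSupport (H i) := fun i => HasCompactSupport.intro hcpt (hHzero i)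
  have div0 := integral_div_eq_zero H hHsm hHsupp
  have hpt : ∀ x ∈ Ω, ∑ i, pd i (H i) x = gInner g φ J x * sqrtDet g x := by
    intro x hx
    have hφd : DifferentiableAt ℝ φ x := differentiableAt_of_contDiffOn hΩ hφ hx
    have hFd : ∀ i, DifferentiableAt ℝ (F i) x := fun i =>
      differentiableAt_of_contDiffOn hΩ (hFsm i) hx
    have hmul : ∀ i, pd i (H i) x = pd i φ x * F i x + φ x * pd i (F i) x := fun i =>
      pd_mul hφd (hFd i) i
    have hlap : ∑ i, pd i (F i) x = 0 := by
      have h1 := hharm x hx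
      rw [lap] at h1
      have h2 : (sqrtDet g x)⁻¹ ≠ 0 := inv_ne_zero (hg.sqrtDet_pos hx).ne'
      rcases mul_eq_zero.1 h1 with h | h
      · exact absurd h h2
      · exact h
    calc ∑ i, pd i (H i) x
        = ∑ i, (pd i φ x * F i x + φ x * pd i (F i) x) :=
          Finset.sum_congr rfl fun i _ => hmul i
      _ = (∑ i, pd i φ x * F i x) + φ x * ∑ i, pd i (F i) x := by
          rw [Finset.sum_add_distrib, Finset.mul_sum]
      _ = ∑ i, pd i φ x * F i x := by rw [hlap, mul_zero, add_zero]
      _ = gInner g φ J x * sqrtDet g x := by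
          unfold gInner
          rw [Finset.sum_mul]
          refine Finset.sum_congr rfl fun i _ => ?_
          rw [hFval]
          simp only [Finset.mul_sum, Finset.sum_mul]
          exact Finset.sum_congr rfl fun j _ => by ring
  have hout : ∀ x, x ∉ Ω → ∑ i, pd i (H i) x = 0 := by
    intro x hx
    refine Finset.sum_eq_zero fun i _ => ?_
    have hsub : tsupport (H i) ⊆ tsupport φ := by
      apply closure_minimal ?_ (isClosed_tsupport φ)
      intro y hy
      by_contra hyn
      exact hy (by rw [hHval, image_eq_zero_of_notMem_tsupport hyn, zero_mul])
    have hnm : x ∉ tsupport (H i) := fun hmem => hx (hts (hsub hmem))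
    rw [pd, fderiv_of_notMem_tsupport _ hnm]
    simp
  calc ∫ x in Ω, gInner g φ J x * sqrtDet g x
      = ∫ x in Ω, ∑ i, pd i (H i) x :=
        (setIntegral_congr_fun hΩ.measurableSet (fun x hx => (hpt x hx).symm))
    _ = ∫ x : V4, ∑ i, pd i (H i) x := setIntegral_eq_integral_of_forall_compl_eq_zero hout
    _ = 0 := div0


lemma quad_nonneg (M : Matrix (Fin 4) (Fin 4) ℝ) (hM : M.PosSemidef) (w : Fin 4 → ℝ) :
    0 ≤ ∑ i, ∑ j, M i j * w i * w j := by
  have h := hM.dotProduct_mulVec_nonneg w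
  have heq : dotProduct (star w) (M.mulVec w) = ∑ i, ∑ j, M i j * w i * w j := by
    simp only [dotProduct, Matrix.mulVec, star_trivial, Finset.mul_sum]
    exact Finset.sum_congr rfl fun i _ => Finset.sum_congr rfl fun j _ => by ring
  rwa [heq] at h

lemma IsMetric.inv_posSemidef (hg : IsMetric Ω g) {x : V4} (hx : x ∈ Ω) :
    ((g x)⁻¹).PosSemidef := ((hg.posDef x hx).inv).posSemidef

lemma IsMetric.inv_isSymm (hg : IsMetric Ω g) {x : V4} (hx : x ∈ Ω) :
    ((g x)⁻¹).IsSymm := by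
  rw [Matrix.IsSymm, Matrix.transpose_nonsing_inv, (hg.symm x hx).eq]

lemma IsMetric.gNormSq_nonneg (hg : IsMetric Ω g) {u : V4 → ℝ} {x : V4} (hx : x ∈ Ω) :
    0 ≤ gNormSq g u x :=
  quad_nonneg _ (hg.inv_posSemidef hx) (fun i => pd i u x)

lemma contDiffOn_gInner (hg : IsMetric Ω g) {u v : V4 → ℝ}
    (hu : ContDiffOn ℝ (⊤ : ℕ∞) u Ω) (hv : ContDiffOn ℝ (⊤ : ℕ∞) v Ω) :
    ContDiffOn ℝ (⊤ : ℕ∞) (fun x => gInner g u v x) Ω := by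
  apply ContDiffOn.sum; intro i _
  apply ContDiffOn.sum; intro j _
  exact ((hg.contDiffOn_inv i j).mul (contDiffOn_pd hg.isOpen hu i)).mul
    (contDiffOn_pd hg.isOpen hv j)


/-- Caccioppoli-type estimate for the regularized power
`j_δ = (δ² + J²)^{p/4}` of a `g`-harmonic function `J` (δ-regularized form of the
paper's Lemma 3.11). -/
theorem caccioppoli_harmonic_power
    (Ω : Set V4) (g : V4 → Matrix (Fin 4) (Fin 4) ℝ) (hg : IsMetric Ω g)
    (J : V4 → ℝ) (hJ : ContDiffOn ℝ (⊤ : ℕ∞) J Ω)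
    (hharm : ∀ x ∈ Ω, lap g J x = 0)
    (p : ℝ) (hp1 : 1 < p) (hp2 : p ≤ 2) :
    ∀ δ : ℝ, 0 < δ → ∀ χ : V4 → ℝ, IsTestFn Ω χ →
      ∫ x in Ω, χ x ^ 2 *
          gNormSq g (fun y => (δ ^ 2 + J y ^ 2) ^ (p / 4 : ℝ)) x * sqrtDet g x ≤
        (p / (p - 1)) ^ 2 *
          ∫ x in Ω, gNormSq g χ x * ((δ ^ 2 + J x ^ 2) ^ (p / 4 : ℝ)) ^ 2 * sqrtDet g x := by
  
  intro δ hδ χ hχ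
  obtain ⟨hχs, hχc, hχt⟩ := hχ
  have hΩ : IsOpen Ω := hg.isOpen
  have hΩm : MeasurableSet Ω := hΩ.measurableSet
  have hp0 : 0 < p - 1 := by linarith
  have hpne : p - 1 ≠ 0 := hp0.ne'
  have hKc : IsCompact (tsupport χ) := hχc
  have hKΩ : tsupport χ ⊆ Ω := hχt
  have hχ0 : ∀ x ∉ tsupport χ, χ x = 0 := fun x hx => image_eq_zero_of_notMem_tsupport hx
  have hpdχ0 : ∀ (i : Fin 4), ∀ x ∉ tsupport χ, pd i χ x = 0 := by
    intro i x hx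
    rw [pd, fderiv_of_notMem_tsupport _ hx]
    simp
  have hw : ∀ y : V4, 0 < δ ^ 2 + J y ^ 2 := fun y =>
    add_pos_of_pos_of_nonneg (pow_pos hδ 2) (sq_nonneg _)
  have hwsm : ContDiffOn ℝ (⊤ : ℕ∞) (fun y : V4 => δ ^ 2 + J y ^ 2) Ω :=
    contDiffOn_const.add (hJ.pow 2)
  have hwrsm : ∀ r : ℝ, ContDiffOn ℝ (⊤ : ℕ∞) (fun y : V4 => (δ ^ 2 + J y ^ 2) ^ (r : ℝ)) Ω :=
    fun r => hwsm.rpow_const_of_ne (fun y _ => (hw y).ne')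
  have hχsm : ContDiffOn ℝ (⊤ : ℕ∞) χ Ω := hχs.contDiffOn
  -- the four basic integrands
  set fA : V4 → ℝ := fun x =>
    χ x ^ 2 * J x ^ 2 * (δ ^ 2 + J x ^ 2) ^ ((p-4)/2 : ℝ) * gNormSq g J x * sqrtDet g x with hfA
  set fB : V4 → ℝ := fun x =>
    gNormSq g χ x * ((δ ^ 2 + J x ^ 2) ^ (p / 4 : ℝ)) ^ 2 * sqrtDet g x with hfB
  set fM : V4 → ℝ := fun x =>
    2 * χ x * J x * (δ ^ 2 + J x ^ 2) ^ ((p-2)/2 : ℝ) * gInner g χ J x * sqrtDet g x with hfM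
  set fD : V4 → ℝ := fun x =>
    χ x ^ 2 * δ ^ 2 * (δ ^ 2 + J x ^ 2) ^ ((p-4)/2 : ℝ) * gNormSq g J x * sqrtDet g x with hfD
  -- continuity on Ω
  have hcJ : ContinuousOn J Ω := hJ.continuousOn
  have hcχ : ContinuousOn χ Ω := hχsm.continuousOn
  have hcsq : ContinuousOn (sqrtDet g) Ω := hg.contDiffOn_sqrtDet.continuousOn
  have hcwr : ∀ r : ℝ, ContinuousOn (fun x : V4 => (δ ^ 2 + J x ^ 2) ^ (r : ℝ)) Ω :=
    fun r => (hwrsm r).continuousOn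
  have hcgNJ : ContinuousOn (fun x => gNormSq g J x) Ω :=
    (contDiffOn_gInner hg hJ hJ).continuousOn
  have hcgNχ : ContinuousOn (fun x => gNormSq g χ x) Ω :=
    (contDiffOn_gInner hg hχsm hχsm).continuousOn
  have hcgI : ContinuousOn (fun x => gInner g χ J x) Ω :=
    (contDiffOn_gInner hg hχsm hJ).continuousOn
  have hgNχ0 : ∀ x ∉ tsupport χ, gNormSq g χ x = 0 := by
    intro x hx
    show (∑ i, ∑ j, (g x)⁻¹ i j * pd i χ x * pd j χ x) = 0
    exact Finset.sum_eq_zero fun i _ => Finset.sum_eq_zero fun j _ => by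
      rw [hpdχ0 i x hx]; ring
  -- integrability
  have hIA : IntegrableOn fA Ω :=
    integrableOn_of_continuousOn_of_zero hΩ hKc hKΩ
      (((((hcχ.pow 2).mul (hcJ.pow 2)).mul (hcwr _)).mul hcgNJ).mul hcsq)
      (fun x hx => by simp [hfA, hχ0 x hx])
  have hIB : IntegrableOn fB Ω :=
    integrableOn_of_continuousOn_of_zero hΩ hKc hKΩ
      ((hcgNχ.mul ((hcwr _).pow 2)).mul hcsq)
      (fun x hx => by simp [hfB, hgNχ0 x hx])
  have hIM : IntegrableOn fM Ω :=
    integrableOn_of_continuousOn_of_zero hΩ hKc hKΩ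
      ((((((continuousOn_const).mul hcχ).mul hcJ).mul (hcwr _)).mul hcgI).mul hcsq)
      (fun x hx => by simp [hfM, hχ0 x hx])
  have hID : IntegrableOn fD Ω :=
    integrableOn_of_continuousOn_of_zero hΩ hKc hKΩ
      (((((hcχ.pow 2).mul continuousOn_const).mul (hcwr _)).mul hcgNJ).mul hcsq)
      (fun x hx => by simp [hfD, hχ0 x hx])
  -- the test function for the weak identity
  set φ : V4 → ℝ := fun y => χ y ^ 2 * (J y * (δ ^ 2 + J y ^ 2) ^ ((p-2)/2 : ℝ)) with hφdef
  have hφsm : ContDiffOn ℝ (⊤ : ℕ∞) φ Ω := (hχsm.pow 2).mul (hJ.mul (hwrsm _))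
  have hφ0 : ∀ x ∉ tsupport χ, φ x = 0 := fun x hx => by simp [hφdef, hχ0 x hx]
  have hφcpt : HasCompactSupport φ := HasCompactSupport.intro hKc hφ0
  have hφts : tsupport φ ⊆ Ω := by
    refine Subset.trans (closure_minimal ?_ (isClosed_tsupport χ)) hKΩ
    intro y hy
    by_contra hyn
    exact hy (hφ0 y hyn)
  have hweak := weak_identity hg hJ hharm hφsm hφcpt hφts
  -- pointwise expansion of the weak-identity integrand
  have hpt : ∀ x ∈ Ω, gInner g φ J x * sqrtDet g x = fM x + (fD x + (p - 1) * fA x) := by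
    intro x hx
    have hJd : DifferentiableAt ℝ J x := differentiableAt_of_contDiffOn hΩ hJ hx
    have hχd : DifferentiableAt ℝ χ x := (hχs.differentiable (by simp)).differentiableAt
    have hwd : DifferentiableAt ℝ (fun y : V4 => δ ^ 2 + J y ^ 2) x := (hJd.pow 2).const_add _
    have hwrd : ∀ r : ℝ, DifferentiableAt ℝ (fun y : V4 => (δ ^ 2 + J y ^ 2) ^ (r : ℝ)) x :=
      fun r => hwd.rpow_const (Or.inl (hw x).ne')
    have hpdw : ∀ i, pd i (fun y : V4 => δ ^ 2 + J y ^ 2) x = 2 * J x * pd i J x := by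
      intro i
      rw [pd_const_add (δ ^ 2) i]
      exact pd_sq hJd i
    have hψd : DifferentiableAt ℝ (fun y : V4 => J y * (δ ^ 2 + J y ^ 2) ^ ((p-2)/2 : ℝ)) x :=
      hJd.mul (hwrd _)
    have hpdψ : ∀ i, pd i (fun y : V4 => J y * (δ ^ 2 + J y ^ 2) ^ ((p-2)/2 : ℝ)) x
        = pd i J x * (δ ^ 2 + J x ^ 2) ^ ((p-2)/2 : ℝ)
          + J x * ((p-2)/2 * (δ ^ 2 + J x ^ 2) ^ ((p-2)/2 - 1 : ℝ) * (2 * J x * pd i J x)) := by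
      intro i
      rw [pd_mul hJd (hwrd _) i, pd_rpow hwd (hw x).ne' _ i, hpdw i]
    have hexp1 : (δ ^ 2 + J x ^ 2) ^ ((p-2)/2 - 1 : ℝ)
        = (δ ^ 2 + J x ^ 2) ^ ((p-4)/2 : ℝ) := by
      congr 1; ring
    have hexp2 : (δ ^ 2 + J x ^ 2) ^ ((p-2)/2 : ℝ)
        = (δ ^ 2 + J x ^ 2) * (δ ^ 2 + J x ^ 2) ^ ((p-4)/2 : ℝ) := by
      rw [show ((p-2)/2 : ℝ) = 1 + (p-4)/2 by ring, Real.rpow_add (hw x), Real.rpow_one]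
    have hpdφ : ∀ i, pd i φ x
        = (2 * χ x * (J x * (δ ^ 2 + J x ^ 2) ^ ((p-2)/2 : ℝ))) * pd i χ x
          + (χ x ^ 2 * ((δ ^ 2 + J x ^ 2) ^ ((p-2)/2 : ℝ)
              + (p-2) * J x ^ 2 * (δ ^ 2 + J x ^ 2) ^ ((p-4)/2 : ℝ))) * pd i J x := by
      intro i
      rw [hφdef]
      rw [pd_mul (hχd.fun_pow 2) hψd i, pd_sq hχd i, hpdψ i, hexp1]
      ring
    have hgφ : gInner g φ J x
        = (2 * χ x * (J x * (δ ^ 2 + J x ^ 2) ^ ((p-2)/2 : ℝ))) * gInner g χ J x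
          + (χ x ^ 2 * ((δ ^ 2 + J x ^ 2) ^ ((p-2)/2 : ℝ)
              + (p-2) * J x ^ 2 * (δ ^ 2 + J x ^ 2) ^ ((p-4)/2 : ℝ))) * gInner g J J x :=
      gInner_expand hpdφ
    rw [hgφ]
    simp only [hfM, hfD, hfA]
    rw [hexp2]
    rw [show gNormSq g J x = gInner g J J x from rfl]
    ring
  -- split the weak identity into three integrals
  have hIdent : (∫ x in Ω, fM x) + ((∫ x in Ω, fD x) + (p - 1) * ∫ x in Ω, fA x) = 0 := by
    have h1 : ∫ x in Ω, gInner g φ J x * sqrtDet g x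
        = ∫ x in Ω, (fM x + (fD x + (p - 1) * fA x)) :=
      setIntegral_congr_fun hΩm (fun x hx => hpt x hx)
    have e1 : ∫ x in Ω, (fM x + (fD x + (p - 1) * fA x))
        = (∫ x in Ω, fM x) + ∫ x in Ω, (fD x + (p - 1) * fA x) :=
      integral_add hIM (hID.add (hIA.const_mul (p-1)))
    have e2 : ∫ x in Ω, (fD x + (p - 1) * fA x)
        = (∫ x in Ω, fD x) + ∫ x in Ω, (p - 1) * fA x :=
      integral_add hID (hIA.const_mul (p-1))
    have e3 : ∫ x in Ω, (p - 1) * fA x = (p - 1) * ∫ x in Ω, fA x :=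
      integral_const_mul _ _
    rw [h1, e1, e2, e3] at hweak
    exact hweak
  have hIDpos : 0 ≤ ∫ x in Ω, fD x := by
    refine setIntegral_nonneg hΩm (fun x hx => ?_)
    have h1 : 0 ≤ gNormSq g J x := hg.gNormSq_nonneg hx
    have h2 : 0 ≤ sqrtDet g x := Real.sqrt_nonneg _
    have h3 : 0 ≤ (δ ^ 2 + J x ^ 2) ^ ((p-4)/2 : ℝ) := Real.rpow_nonneg (hw x).le _
    simp only [hfD]
    exact mul_nonneg (mul_nonneg (mul_nonneg (mul_nonneg (sq_nonneg _) (sq_nonneg _)) h3) h1) h2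
  -- pointwise Young inequality
  set ε : ℝ := (p-1)/2 with hεdef
  have hεpos : 0 < ε := by rw [hεdef]; linarith
  have hyoung : ∀ x ∈ Ω, -fM x ≤ ε * fA x + ε⁻¹ * fB x := by
    intro x hx
    have hM := hg.inv_posSemidef hx
    have hMs := hg.inv_isSymm hx
    have key := quad_expand ((g x)⁻¹) hM hMs
      (fun i => (χ x * J x * (δ ^ 2 + J x ^ 2) ^ ((p-4)/4 : ℝ)) * pd i J x)
      (fun i => ((δ ^ 2 + J x ^ 2) ^ (p / 4 : ℝ)) * pd i χ x) hεpos
    beta_reduce at key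
    have hpp : (δ ^ 2 + J x ^ 2) ^ (p / 4 : ℝ) * (δ ^ 2 + J x ^ 2) ^ ((p-4)/4 : ℝ)
        = (δ ^ 2 + J x ^ 2) ^ ((p-2)/2 : ℝ) := by
      rw [← Real.rpow_add (hw x)]; congr 1; ring
    have hrr : (δ ^ 2 + J x ^ 2) ^ ((p-4)/4 : ℝ) * (δ ^ 2 + J x ^ 2) ^ ((p-4)/4 : ℝ)
        = (δ ^ 2 + J x ^ 2) ^ ((p-4)/2 : ℝ) := by
      rw [← Real.rpow_add (hw x)]; congr 1; ring
    have hSvu : (∑ i, ∑ j, (g x)⁻¹ i j * (((δ ^ 2 + J x ^ 2) ^ (p / 4 : ℝ)) * pd i χ x)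
          * ((χ x * J x * (δ ^ 2 + J x ^ 2) ^ ((p-4)/4 : ℝ)) * pd j J x))
        = χ x * J x * (δ ^ 2 + J x ^ 2) ^ ((p-2)/2 : ℝ) * gInner g χ J x := by
      rw [show gInner g χ J x = ∑ i, ∑ j, (g x)⁻¹ i j * pd i χ x * pd j J x from rfl,
        Finset.mul_sum]
      refine Finset.sum_congr rfl fun i _ => ?_
      rw [Finset.mul_sum]
      refine Finset.sum_congr rfl fun j _ => ?_
      linear_combination ((g x)⁻¹ i j * pd i χ x * pd j J x * χ x * J x) * hpp
    have hSuu : (∑ i, ∑ j, (g x)⁻¹ i j * ((χ x * J x * (δ ^ 2 + J x ^ 2) ^ ((p-4)/4 : ℝ)) * pd i J x)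
          * ((χ x * J x * (δ ^ 2 + J x ^ 2) ^ ((p-4)/4 : ℝ)) * pd j J x))
        = χ x ^ 2 * J x ^ 2 * (δ ^ 2 + J x ^ 2) ^ ((p-4)/2 : ℝ) * gNormSq g J x := by
      rw [show gNormSq g J x = ∑ i, ∑ j, (g x)⁻¹ i j * pd i J x * pd j J x from rfl,
        Finset.mul_sum]
      refine Finset.sum_congr rfl fun i _ => ?_
      rw [Finset.mul_sum]
      refine Finset.sum_congr rfl fun j _ => ?_
      linear_combination ((g x)⁻¹ i j * pd i J x * pd j J x * χ x ^ 2 * J x ^ 2) * hrr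
    have hSvv : (∑ i, ∑ j, (g x)⁻¹ i j * (((δ ^ 2 + J x ^ 2) ^ (p / 4 : ℝ)) * pd i χ x)
          * (((δ ^ 2 + J x ^ 2) ^ (p / 4 : ℝ)) * pd j χ x))
        = ((δ ^ 2 + J x ^ 2) ^ (p / 4 : ℝ)) ^ 2 * gNormSq g χ x := by
      rw [show gNormSq g χ x = ∑ i, ∑ j, (g x)⁻¹ i j * pd i χ x * pd j χ x from rfl,
        Finset.mul_sum]
      refine Finset.sum_congr rfl fun i _ => ?_
      rw [Finset.mul_sum]
      refine Finset.sum_congr rfl fun j _ => ?_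
      ring
    rw [hSvu, hSuu, hSvv] at key
    have hsq : 0 ≤ sqrtDet g x := Real.sqrt_nonneg _
    have key2 := mul_le_mul_of_nonneg_right key hsq
    simp only [hfM, hfA, hfB]
    nlinarith [key2]
  -- integrated Young inequality
  have hIY : -(∫ x in Ω, fM x) ≤ ε * (∫ x in Ω, fA x) + ε⁻¹ * (∫ x in Ω, fB x) := by
    have h1 : ∫ x in Ω, (-fM x) ≤ ∫ x in Ω, (ε * fA x + ε⁻¹ * fB x) :=
      setIntegral_mono_on hIM.neg ((hIA.const_mul ε).add (hIB.const_mul ε⁻¹)) hΩm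
        (fun x hx => hyoung x hx)
    have e1 : ∫ x in Ω, (ε * fA x + ε⁻¹ * fB x)
        = (∫ x in Ω, ε * fA x) + ∫ x in Ω, ε⁻¹ * fB x :=
      integral_add (hIA.const_mul ε) (hIB.const_mul ε⁻¹)
    have e2 : ∫ x in Ω, ε * fA x = ε * ∫ x in Ω, fA x := integral_const_mul _ _
    have e3 : ∫ x in Ω, ε⁻¹ * fB x = ε⁻¹ * ∫ x in Ω, fB x := integral_const_mul _ _
    rw [integral_neg, e1, e2, e3] at h1
    exact h1
  -- rewrite the goal LHS
  have hLHS : (∫ x in Ω, χ x ^ 2 *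
        gNormSq g (fun y => (δ ^ 2 + J y ^ 2) ^ (p / 4 : ℝ)) x * sqrtDet g x)
      = p ^ 2 / 4 * ∫ x in Ω, fA x := by
    rw [show (p ^ 2 / 4 * ∫ x in Ω, fA x) = ∫ x in Ω, p ^ 2 / 4 * fA x from
      (integral_const_mul _ _).symm]
    refine setIntegral_congr_fun hΩm (fun x hx => ?_)
    have hJd : DifferentiableAt ℝ J x := differentiableAt_of_contDiffOn hΩ hJ hx
    have hwd : DifferentiableAt ℝ (fun y : V4 => δ ^ 2 + J y ^ 2) x := (hJd.pow 2).const_add _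
    have hpdw : ∀ i, pd i (fun y : V4 => δ ^ 2 + J y ^ 2) x = 2 * J x * pd i J x := by
      intro i
      rw [pd_const_add (δ ^ 2) i]
      exact pd_sq hJd i
    have hpdj : ∀ i, pd i (fun y : V4 => (δ ^ 2 + J y ^ 2) ^ (p / 4 : ℝ)) x
        = (p / 4 * (δ ^ 2 + J x ^ 2) ^ (p / 4 - 1 : ℝ) * (2 * J x)) * pd i J x := by
      intro i
      rw [pd_rpow hwd (hw x).ne' _ i, hpdw i]
      ring
    have hgnj : gNormSq g (fun y => (δ ^ 2 + J y ^ 2) ^ (p / 4 : ℝ)) x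
        = (p / 4 * (δ ^ 2 + J x ^ 2) ^ (p / 4 - 1 : ℝ) * (2 * J x))
          * (p / 4 * (δ ^ 2 + J x ^ 2) ^ (p / 4 - 1 : ℝ) * (2 * J x)) * gInner g J J x :=
      gInner_smul2 hpdj hpdj
    have hcc : (δ ^ 2 + J x ^ 2) ^ (p / 4 - 1 : ℝ) * (δ ^ 2 + J x ^ 2) ^ (p / 4 - 1 : ℝ)
        = (δ ^ 2 + J x ^ 2) ^ ((p-4)/2 : ℝ) := by
      rw [← Real.rpow_add (hw x)]; congr 1; ring
    rw [hgnj]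
    simp only [hfA]
    rw [show gNormSq g J x = gInner g J J x from rfl]
    linear_combination (χ x ^ 2 * gInner g J J x * sqrtDet g x * (p ^ 2 / 4) * J x ^ 2) * hcc
  rw [hLHS]
  -- final numeric assembly
  set IA := ∫ x in Ω, fA x with hIAdef
  set IB := ∫ x in Ω, fB x with hIBdef
  set IM := ∫ x in Ω, fM x with hIMdef
  set ID := ∫ x in Ω, fD x with hIDdef
  have hεinv : ε⁻¹ = 2/(p-1) := by rw [hεdef, inv_div]
  have h0 : (p-1) * IA ≤ (p-1)/2 * IA + 2/(p-1) * IB := by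
    rw [hεinv, hεdef] at hIY
    linarith [hIdent, hIDpos, hIY]
  have h3 : (p-1)^2 * IA ≤ (p-1)^2/2 * IA + 2 * IB := by
    have h1 := mul_le_mul_of_nonneg_left h0 hp0.le
    have h2 : (p-1) * (2/(p-1) * IB) = 2 * IB := by field_simp
    calc (p-1)^2 * IA = (p-1) * ((p-1) * IA) := by ring
      _ ≤ (p-1) * ((p-1)/2 * IA + 2/(p-1) * IB) := h1
      _ = (p-1) * ((p-1)/2 * IA) + (p-1) * (2/(p-1) * IB) := by ring
      _ = (p-1)^2/2 * IA + 2 * IB := by rw [h2]; ring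
  have h4 : (p-1)^2 * IA ≤ 4 * IB := by linarith
  have hc : (0:ℝ) ≤ p^2/(4*(p-1)^2) := by positivity
  have h5 := mul_le_mul_of_nonneg_left h4 hc
  calc p ^ 2 / 4 * IA = p^2/(4*(p-1)^2) * ((p-1)^2 * IA) := by
        field_simp
      _ ≤ p^2/(4*(p-1)^2) * (4 * IB) := h5
      _ = (p / (p-1)) ^ 2 * IB := by
        field_simp
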